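/- arXiv:1609.00299 — 2 statements merged into one kernel-verified Lean document; each statement's English description precedes it below -/
import Mathlib

section
/- Let p be a prime, d a positive integer, e = 1 + 2·ν_p(d), and suppose c ∈ ℤ_p (the p-adic integers) satisfies c ≡ x₁^d + x₂^d + ⋯ + x_ℓ^d (mod p^e) for some x₁,…,x_ℓ ∈ ℤ_p with x₁ a unit. Then there exist y₁,…,y_ℓ ∈ ℤ_p with c = y₁^d + ⋯ + y_ℓ^d. -/
/-!
Only the unit base `x i₀` is moved: the other bases are kept, and `x i₀` is a root of
`X ^ d - b` modulo `p ^ (1 + 2 ν_p(d))`, where `b = c - ∑_{i ≠ i₀} x i ^ d`. Since `x i₀` is a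
unit, the derivative `d x i₀ ^ (d - 1)` has norm exactly `p ^ (-ν_p(d))`, so the residue is
smaller than the squared norm of the derivative and Hensel's lemma gives an exact root.
-/

open Polynomial Finset

namespace PadicInt

variable {p : ℕ} [Fact p.Prime]

theorem norm_natCast_eq_zpow_neg_padicValNat {n : ℕ} (hn : n ≠ 0) :
    ‖(n : ℤ_[p])‖ = (p : ℝ) ^ (-(padicValNat p n : ℤ)) := by
  rw [norm_def, coe_natCast, Padic.norm_eq_zpow_neg_valuation (Nat.cast_ne_zero.mpr hn),
    Padic.valuation_natCast]

theorem exists_pow_eq_of_dvd_sub_pow {d : ℕ} (hd : d ≠ 0) {b u : ℤ_[p]} (hu : IsUnit u)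
    (h : (p : ℤ_[p]) ^ (1 + 2 * padicValNat p d) ∣ b - u ^ d) : ∃ z : ℤ_[p], z ^ d = b := by
  set F : ℤ_[p][X] := X ^ d - C b
  have hp : (1 : ℝ) < p := mod_cast (Fact.out : p.Prime).one_lt
  have hresidue : ‖F.aeval u‖ ≤ (p : ℝ) ^ (-(1 + 2 * padicValNat p d : ℕ) : ℤ) := by
    rw [norm_le_pow_iff_mem_span_pow, Ideal.mem_span_singleton, ← dvd_neg]
    simpa [F] using h
  have hderiv : ‖F.derivative.aeval u‖ = (p : ℝ) ^ (-(padicValNat p d : ℤ)) := by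
    simp [F, derivative_X_pow, isUnit_iff.mp hu, norm_natCast_eq_zpow_neg_padicValNat hd]
  obtain ⟨z, hz, -⟩ := hensels_lemma (F := F) (a := u) <| hresidue.trans_lt <| by
    rw [hderiv, ← zpow_natCast, ← zpow_mul, zpow_lt_zpow_iff_right₀ hp]
    push_cast
    omega
  exact ⟨z, by simpa [F, sub_eq_zero] using hz⟩

end PadicInt

/-- Hensel lifting for sums of `ℓ` `d`-th powers in `ℤ_p`: if `c` is congruent
modulo `p^e`, `e = 1 + 2ν_p(d)`, to a sum of `d`-th powers with one of the bases
a unit, then `c` is exactly a sum of `ℓ` `d`-th powers in `ℤ_p`. -/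
theorem sum_pow_lift (p : ℕ) [Fact p.Prime] (d : ℕ) (hd : 0 < d)
    (ℓ : ℕ) (c : ℤ_[p]) (x : Fin ℓ → ℤ_[p]) (i₀ : Fin ℓ) (hx : IsUnit (x i₀))
    (hc : (p : ℤ_[p]) ^ (1 + 2 * padicValNat p d) ∣ (c - ∑ i, x i ^ d)) :
    ∃ y : Fin ℓ → ℤ_[p], c = ∑ i, y i ^ d := by
  have hsplit (y : Fin ℓ → ℤ_[p]) : ∑ i, y i ^ d = y i₀ ^ d + ∑ i ∈ univ \ {i₀}, y i ^ d :=
    sum_eq_add_sum_sdiff_singleton_of_mem (mem_univ i₀) _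
  obtain ⟨z, hz⟩ := PadicInt.exists_pow_eq_of_dvd_sub_pow hd.ne' hx
    (b := c - ∑ i ∈ univ \ {i₀}, x i ^ d) (by rwa [hsplit, add_comm (x i₀ ^ d), ← sub_sub] at hc)
  refine ⟨Function.update x i₀ z, ?_⟩
  have hrest : ∑ i ∈ univ \ {i₀}, Function.update x i₀ z i ^ d = ∑ i ∈ univ \ {i₀}, x i ^ d :=
    sum_congr rfl fun i hi => by rw [Function.update_of_ne (by simpa using hi)]
  rw [hsplit, Function.update_self, hz, hrest, sub_add_cancel]
end

section
/- For e ≥ 1 and n > e + 2, an odd integer a satisfies: the congruence x^(2^e) ≡ a (mod 2^n) has a solution if and only if a ≡ 1 (mod 2^(e+2)). -/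
/-!
An odd `x` satisfies `x ^ 2 ≡ 1 (mod 8)`, and squaring `1 + 2 ^ (e + 2) t` gives
`1 + 2 ^ (e + 3) t'`, so every `2 ^ e`-th power of an odd integer is `≡ 1 (mod 2 ^ (e + 2))`.
Conversely, `(1 + 2 ^ (e + 2) u) ^ 2 = 1 + 2 ^ (e + 3) (u + 2 ^ (e + 1) u ^ 2)`, and
`u ↦ u + 2 ^ (e + 1) u ^ 2` is a bijection of `ℤ / 2 ^ n`: it is injective because
`1 + 2 ^ (e + 1) (u + w)` is a unit, `2` being nilpotent. Hence every
`1 + 2 ^ (e + 3) v` is the square of some `1 + 2 ^ (e + 2) u`, which by induction is a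
`2 ^ e`-th power.
-/

theorem IsNilpotent.add_mul_sq_injective {R : Type*} [CommRing R] {c : R}
    (hc : IsNilpotent c) : Function.Injective fun z : R => z + c * z ^ 2 := by
  intro z w h
  have hfactor : (z - w) * (1 + c * (z + w)) = 0 := by linear_combination h
  have hunit : IsUnit (1 + c * (z + w)) :=
    ((Commute.all _ _).isNilpotent_mul_right hc).isUnit_one_add
  exact sub_eq_zero.mp (hunit.mul_left_eq_zero.mp hfactor)

theorem exists_pow_two_pow_eq_one_add_two_pow_mul {R : Type*} [CommRing R] [Finite R]
    (h2 : IsNilpotent (2 : R)) (e : ℕ) (v : R) :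
    ∃ x : R, x ^ 2 ^ e = 1 + 2 ^ (e + 2) * v := by
  induction e generalizing v with
  | zero => exact ⟨1 + 4 * v, by ring⟩
  | succ e ih =>
    obtain ⟨u, hu⟩ := Finite.surjective_of_injective
      (h2.pow_of_pos e.add_one_ne_zero).add_mul_sq_injective v
    obtain ⟨x, hx⟩ := ih u
    exact ⟨x, by rw [pow_succ, pow_mul, hx, ← hu]; ring⟩

theorem ZMod.isNilpotent_two_pow (n : ℕ) : IsNilpotent (2 : ZMod (2 ^ n)) :=
  ⟨n, by exact_mod_cast ZMod.natCast_self (2 ^ n)⟩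

theorem Int.pow_two_pow_modEq_one_of_odd {x : ℤ} (hx : Odd x) {e : ℕ} (he : 1 ≤ e) :
    x ^ 2 ^ e ≡ 1 [ZMOD 2 ^ (e + 2)] := by
  induction e, he using Nat.le_induction with
  | base => exact (Int.modEq_iff_dvd.mpr (Int.eight_dvd_sq_sub_one_of_odd hx)).symm
  | succ e _ ih =>
    obtain ⟨t, ht⟩ := ih.symm.dvd
    apply Int.ModEq.symm
    refine Int.modEq_iff_dvd.mpr ⟨t * (2 ^ (e + 1) * t + 1), ?_⟩
    rw [pow_succ, pow_mul, eq_add_of_sub_eq ht]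
    ring

theorem ZMod.exists_pow_eq_intCast_iff (m k : ℕ) (a : ℤ) :
    (∃ x : ZMod m, x ^ k = a) ↔ ∃ b : ℤ, b ^ k ≡ a [ZMOD m] := by
  simp only [← ZMod.intCast_eq_intCast_iff, Int.cast_pow]
  exact ZMod.intCast_surjective.exists

/-- For `e ≥ 1` and `n > e + 2`, an odd integer `a` is a `2^e`-th power
modulo `2^n` iff `a ≡ 1 (mod 2^(e+2))`. -/
theorem pow_two_pow_mod_large (e n : ℕ) (he : 1 ≤ e) (hn : e + 2 < n)
    (a : ℤ) (ha : Odd a) :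
    (∃ x : ZMod (2 ^ n), x ^ (2 ^ e) = (a : ZMod (2 ^ n))) ↔
      a ≡ 1 [ZMOD (2 : ℤ) ^ (e + 2)] := by
  constructor
  · intro hroot
    obtain ⟨b, hb⟩ := (ZMod.exists_pow_eq_intCast_iff _ _ a).mp (by exact_mod_cast hroot)
    have hb : b ^ 2 ^ e ≡ a [ZMOD 2 ^ (e + 2)] :=
      hb.of_dvd (by exact_mod_cast pow_dvd_pow 2 hn.le)
    have hb_odd : Odd b := by
      have hb2 : b ^ 2 ^ e ≡ a [ZMOD 2] := hb.of_dvd (dvd_pow_self 2 (by omega))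
      exact (Int.odd_pow' (pow_ne_zero e two_ne_zero)).mp
        (Int.odd_iff.mpr (hb2.eq.trans (Int.odd_iff.mp ha)))
    exact hb.symm.trans (Int.pow_two_pow_modEq_one_of_odd hb_odd he)
  · intro ha1
    obtain ⟨v, hv⟩ := ha1.symm.dvd
    obtain ⟨x, hx⟩ := exists_pow_two_pow_eq_one_add_two_pow_mul (ZMod.isNilpotent_two_pow n) e v
    exact ⟨x, by rw [hx, eq_add_of_sub_eq hv]; push_cast; ring⟩
end
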